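/- Every 1-recognizable subset of ℕ^d is semi-linear, but for d = 2 the converse fails: {(n, 2n) : n ∈ ℕ} is semi-linear but not 1-recognizable. -/

import Mathlib

/-!
Letter `j` of the padded word of `v` is the set of coordinates with `j < vᵢ`, so the word is
a concatenation `c₁^{m₁} ⋯ c_d^{m_d}` of at most `d` constant blocks, and `v` is recovered
from any such word as its vector of letter counts, which is linear in `m`. A DFA reads a block `c^m`
by iterating one map of its finite state space, so for fixed letters and fixed intermediate
states the admissible `m` form a product of ultimately periodic sets, i.e. of finite unions of
arithmetic progressions. Hence a 1-recognizable set is a finite union of linear images of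
linear sets.

For `{(n, 2n)}` the padded words are `(a,a)ⁿ (#,a)ⁿ`, so the left quotients of the language by
the words `(a,a)ⁿ` are pairwise distinct, and Myhill–Nerode rules out regularity.
-/

/-- The padded unary representation of `(n₁, …, n_d) ∈ ℕ^d` as a word over
`({a} ∪ {#})^d`, letters encoded as functions `Fin d → Bool` (`true` = `a`, `false` = `#`). -/
def padRep (d : ℕ) (v : Fin d → ℕ) : List (Fin d → Bool) :=
  List.ofFn (fun j : Fin (Finset.univ.sup v) => fun i => decide ((j : ℕ) < v i))

/-- `X ⊆ ℕ^d` is `1`-recognizable. -/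
def OneRecognizable (d : ℕ) (X : Set (Fin d → ℕ)) : Prop :=
  Language.IsRegular {w : List (Fin d → Bool) | ∃ v ∈ X, w = padRep d v}

/--  is a linear set. -/
def LinearSet (d : ℕ) (X : Set (Fin d → ℕ)) : Prop :=
  ∃ (v₀ : Fin d → ℕ) (t : ℕ) (v : Fin t → Fin d → ℕ),
    X = {x : Fin d → ℕ | ∃ n : Fin t → ℕ, x = v₀ + ∑ i, n i • v i}

/--  is a semi-linear set: a finite union of linear sets. -/
def SemiLinearSet (d : ℕ) (X : Set (Fin d → ℕ)) : Prop :=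
  ∃ (k : ℕ) (Y : Fin k → Set (Fin d → ℕ)), (∀ i, LinearSet d (Y i)) ∧ X = ⋃ i, Y i

open Finset Function

section SemiLinear

variable {d e : ℕ}

theorem LinearSet.semiLinearSet {X : Set (Fin d → ℕ)} (h : LinearSet d X) : SemiLinearSet d X :=
  ⟨1, fun _ => X, fun _ => h, (Set.iUnion_const X).symm⟩

theorem semiLinearSet_iUnion {ι : Type*} [Finite ι] {Y : ι → Set (Fin d → ℕ)}
    (h : ∀ i, SemiLinearSet d (Y i)) : SemiLinearSet d (⋃ i, Y i) := by
  have := Fintype.ofFinite ι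
  choose k Z hZ hYZ using h
  let enum : (Σ i, Fin (k i)) ≃ Fin (∑ i, k i) := Fintype.equivFinOfCardEq (by simp)
  refine ⟨_, fun j => Z (enum.symm j).1 (enum.symm j).2, fun j => hZ _ _, ?_⟩
  calc ⋃ i, Y i = ⋃ p : Σ i, Fin (k i), Z p.1 p.2 := by
        simp_rw [hYZ]
        exact Set.iUnion_sigma' Z
    _ = ⋃ j, Z (enum.symm j).1 (enum.symm j).2 :=
      (Equiv.iSup_comp (g := fun p : Σ i, Fin (k i) => Z p.1 p.2) enum.symm).symm

theorem LinearSet.image {X : Set (Fin e → ℕ)} (h : LinearSet e X)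
    (A : (Fin e → ℕ) →ₗ[ℕ] (Fin d → ℕ)) : LinearSet d (A '' X) := by
  obtain ⟨v₀, t, v, rfl⟩ := h
  refine ⟨A v₀, t, fun i => A (v i), ?_⟩
  ext x
  simp only [Set.mem_image, Set.mem_ofPred_eq]
  constructor
  · rintro ⟨_, ⟨n, rfl⟩, rfl⟩
    exact ⟨n, by simp only [map_add, map_sum, map_nsmul]⟩
  · rintro ⟨n, rfl⟩
    exact ⟨_, ⟨n, rfl⟩, by simp only [map_add, map_sum, map_nsmul]⟩

theorem SemiLinearSet.image {X : Set (Fin e → ℕ)} (h : SemiLinearSet e X)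
    (A : (Fin e → ℕ) →ₗ[ℕ] (Fin d → ℕ)) : SemiLinearSet d (A '' X) := by
  obtain ⟨k, Y, hY, rfl⟩ := h
  rw [Set.image_iUnion]
  exact semiLinearSet_iUnion fun i => ((hY i).image A).semiLinearSet

def arithProg (a p : ℕ) : Set ℕ := {x | ∃ n, x = a + n * p}

theorem linearSet_pi_arithProg (a p : Fin e → ℕ) :
    LinearSet e (Set.univ.pi fun k => arithProg (a k) (p k)) := by
  refine ⟨a, e, fun k => Pi.single k (p k), ?_⟩
  have hcoord (n : Fin e → ℕ) :
      a + ∑ k, n k • Pi.single k (p k) = fun k => a k + n k * p k := by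
    ext k
    simp [Finset.sum_apply, Pi.single_apply]
  ext m
  simp only [Set.mem_univ_pi, arithProg, Set.mem_ofPred_eq, hcoord, funext_iff]
  exact ⟨fun h => ⟨fun k => (h k).choose, fun k => (h k).choose_spec⟩,
    fun ⟨n, hn⟩ k => ⟨n k, hn k⟩⟩

def UltimatelyPeriodic (S : Set ℕ) : Prop :=
  ∃ i p, 0 < p ∧ ∀ n ≥ i, n + p ∈ S ↔ n ∈ S

/-- Each residue below `i + p` that lies in `S` starts a progression of period `p`, or of period
`0` when it lies below the threshold `i`. -/
theorem UltimatelyPeriodic.exists_eq_iUnion_arithProg {S : Set ℕ} (hS : UltimatelyPeriodic S) :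
    ∃ (ι : Type) (_ : Finite ι) (a p : ι → ℕ), S = ⋃ r, arithProg (a r) (p r) := by
  obtain ⟨i, p, hp, hper⟩ := hS
  refine ⟨{c : Fin (i + p) // (c : ℕ) ∈ S}, inferInstance, fun c => c.1,
    fun c => if (c.1 : ℕ) < i then 0 else p, Set.Subset.antisymm (fun n hn => ?_) ?_⟩
  · simp only [Set.mem_iUnion, arithProg, Set.mem_ofPred_eq]
    induction n using Nat.strong_induction_on with
    | _ n ih =>
      by_cases hn' : n < i + p
      · exact ⟨⟨⟨n, hn'⟩, hn⟩, 0, by simp⟩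
      have hprev : n - p ∈ S := (hper _ (by omega)).1 (by rwa [Nat.sub_add_cancel (by omega)])
      obtain ⟨c, t, hc⟩ := ih (n - p) (by omega) hprev
      split_ifs at hc with hci
      · omega
      · refine ⟨c, t + 1, ?_⟩
        rw [if_neg hci]
        linarith [Nat.sub_add_cancel (show p ≤ n by omega)]
  · rintro _ ⟨_, ⟨c, rfl⟩, t, rfl⟩
    dsimp only
    split_ifs with hci
    · simpa using c.2
    · induction t with
      | zero => simpa using c.2
      | succ t ih => rw [add_mul, one_mul, ← add_assoc, hper _ (by omega)]; exact ih

theorem semiLinearSet_univ_pi {S : Fin e → Set ℕ} (hS : ∀ k, UltimatelyPeriodic (S k)) :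
    SemiLinearSet e (Set.univ.pi S) := by
  choose ι _ a p hS using fun k => (hS k).exists_eq_iUnion_arithProg
  rw [funext hS, ← Set.iUnion_univ_pi]
  exact semiLinearSet_iUnion fun r => (linearSet_pi_arithProg _ _).semiLinearSet

end SemiLinear

theorem ultimatelyPeriodic_setOf_iterate_eq {α : Type*} [Finite α] (f : α → α) (x y : α) :
    UltimatelyPeriodic {n | f^[n] x = y} := by
  obtain ⟨a, b, hab, h⟩ := Finite.exists_ne_map_eq_of_infinite fun n => f^[n] x
  wlog hlt : a < b generalizing a b
  · exact this b a hab.symm h.symm (by omega)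
  refine ⟨a, b - a, by omega, fun n hn => ?_⟩
  have hcycle : f^[n + (b - a)] x = f^[n] x := by
    rw [show n + (b - a) = (n - a) + b by omega, iterate_add_apply, ← h, ← iterate_add_apply,
      Nat.sub_add_cancel hn]
  simp only [Set.mem_ofPred_eq, hcycle]

namespace DFA

variable {α σ : Type*} (M : DFA α σ)

theorem evalFrom_replicate (s : σ) (a : α) (n : ℕ) :
    M.evalFrom s (List.replicate n a) = (M.step · a)^[n] s := by
  induction n generalizing s with
  | zero => rfl
  | succ n ih => rw [List.replicate_succ, evalFrom_cons, ih, iterate_succ_apply]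

theorem evalFrom_flatten_ofFn_eq_iff {e : ℕ} (w : Fin e → List α) (s r : σ) :
    M.evalFrom s (List.ofFn w).flatten = r ↔
      ∃ q : Fin (e + 1) → σ, q 0 = s ∧ q (Fin.last e) = r ∧
        ∀ k, M.evalFrom (q k.castSucc) (w k) = q k.succ := by
  induction e generalizing s with
  | zero =>
    refine ⟨fun h => ⟨fun _ => s, rfl, h, fun k => k.elim0⟩, fun ⟨q, hq0, hql, _⟩ => ?_⟩
    exact hq0 ▸ hql
  | succ e ih =>
    rw [List.ofFn_succ, List.flatten_cons, evalFrom_of_append, ih]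
    constructor
    · rintro ⟨q, hq0, hql, hq⟩
      refine ⟨Fin.cons s q, rfl, by rwa [← Fin.succ_last, Fin.cons_succ],
        Fin.cases ?_ fun k => ?_⟩
      · simpa using hq0.symm
      · simpa [← Fin.succ_castSucc] using hq k
    · rintro ⟨q, hq0, hql, hq⟩
      refine ⟨Fin.tail q, ?_, by rwa [Fin.tail, Fin.succ_last], fun k => ?_⟩
      · rw [← hq0]
        exact (hq 0).symm
      · have := hq k.succ
        rwa [← Fin.succ_castSucc] at this

end DFA

section BlockWord

variable {α : Type*} {e : ℕ}

def blockWord (c : Fin e → α) (m : Fin e → ℕ) : List α :=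
  (List.ofFn fun k => List.replicate (m k) (c k)).flatten

theorem blockWord_cons (a : α) (c : Fin e → α) (n : ℕ) (m : Fin e → ℕ) :
    blockWord (Fin.cons a c : Fin (e + 1) → α) (Fin.cons n m) =
      List.replicate n a ++ blockWord c m := by
  simp [blockWord, List.ofFn_succ]

theorem semiLinearSet_setOf_blockWord_mem_accepts {σ : Type*} [Finite σ] (M : DFA α σ)
    (c : Fin e → α) : SemiLinearSet e {m | blockWord c m ∈ M.accepts} := by
  have hset : {m | blockWord c m ∈ M.accepts} =
      ⋃ q : {q : Fin (e + 1) → σ // q 0 = M.start ∧ q (Fin.last e) ∈ M.accept},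
        Set.univ.pi fun k => {n | (M.step · (c k))^[n] (q.1 k.castSucc) = q.1 k.succ} := by
    ext m
    simp only [Set.mem_ofPred_eq, DFA.mem_accepts, DFA.eval, blockWord, Set.mem_iUnion,
      Set.mem_univ_pi, ← DFA.evalFrom_replicate]
    constructor
    · intro hm
      obtain ⟨q, hq0, hql, hq⟩ := (M.evalFrom_flatten_ofFn_eq_iff _ _ _).1 rfl
      exact ⟨⟨q, hq0, hql ▸ hm⟩, hq⟩
    · rintro ⟨⟨q, hq0, hql⟩, hq⟩
      rw [(M.evalFrom_flatten_ofFn_eq_iff _ _ _).2 ⟨q, hq0, rfl, hq⟩]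
      exact hql
  rw [hset]
  exact semiLinearSet_iUnion fun q =>
    semiLinearSet_univ_pi fun k => ultimatelyPeriodic_setOf_iterate_eq _ _ _

end BlockWord

section PadRep

variable {d : ℕ}

def letterCount (w : List (Fin d → Bool)) : Fin d → ℕ :=
  (w.map fun a i => if a i then 1 else 0).sum

theorem letterCount_padRep (v : Fin d → ℕ) : letterCount (padRep d v) = v := by
  ext i
  simp only [letterCount, padRep, List.map_ofFn, List.sum_ofFn, comp_def, Finset.sum_apply,
    decide_eq_true_eq]
  rw [Finset.sum_boole, Fin.card_filter_val_lt]
  simpa using Finset.le_sup (f := v) (mem_univ i)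

theorem letterCount_blockWord {e : ℕ} (c : Fin e → Fin d → Bool) (m : Fin e → ℕ) :
    letterCount (blockWord c m) = Fintype.linearCombination ℕ (fun k => letterCount [c k]) m := by
  simp [blockWord, letterCount, List.sum_flatten, List.map_flatten,
    Fintype.linearCombination_apply, List.sum_ofFn, comp_def]

@[simp]
theorem padRep_zero : padRep d 0 = [] := by
  simp [padRep]

theorem padRep_ite_add (a : Fin d → Bool) (n : ℕ) (v : Fin d → ℕ)
    (hv : ∀ i, v i ≠ 0 → a i) (ha : ∃ i, a i) :
    padRep d (fun i => (if a i then n else 0) + v i) = List.replicate n a ++ padRep d v := by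
  have hsup : univ.sup (fun i => (if a i then n else 0) + v i) = n + univ.sup v := by
    obtain ⟨i₁, hi₁⟩ := ha
    obtain ⟨i₀, -, hi₀⟩ := univ.exists_mem_eq_sup ⟨i₁, mem_univ _⟩ v
    refine le_antisymm (Finset.sup_le fun i _ => ?_) ?_
    · have := Finset.le_sup (f := v) (mem_univ i)
      split_ifs <;> omega
    · by_cases h0 : v i₀ = 0
      · have := Finset.le_sup (f := fun i => (if a i then n else 0) + v i) (mem_univ i₁)
        simp only [hi₁, if_true] at this
        omega
      · have := Finset.le_sup (f := fun i => (if a i then n else 0) + v i) (mem_univ i₀)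
        simp only [hv i₀ h0, if_true] at this
        omega
  refine List.ext_getElem (by simp only [padRep, List.length_ofFn, List.length_append,
    List.length_replicate, hsup]) fun j _ _ => ?_
  simp only [padRep, List.getElem_ofFn, List.getElem_append, List.getElem_replicate,
    List.length_replicate]
  ext i
  by_cases hai : a i
  · split_ifs <;> simp only [hai, decide_eq_true_eq, decide_eq_decide] <;> omega
  · have : v i = 0 := by by_contra h; exact hai (hv i h)
    split_ifs <;> simp [hai, this]

/-- Peel off the block of letters shared by all nonzero coordinates, up to the least nonzero
value; that coordinate then drops out of the support. -/
theorem exists_padRep_eq_blockWord_of_card_le (k : ℕ) (v : Fin d → ℕ)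
    (hv : #{i | v i ≠ 0} ≤ k) :
    ∃ (c : Fin k → Fin d → Bool) (m : Fin k → ℕ), padRep d v = blockWord c m := by
  induction k generalizing v with
  | zero =>
    have hv0 : ∀ i, v i = 0 := by simpa using card_eq_zero.1 (Nat.le_zero.1 hv)
    obtain rfl : v = 0 := funext hv0
    exact ⟨fun _ _ => false, 0, by simp [blockWord]⟩
  | succ k ih =>
    by_cases hv0 : v = 0
    · exact ⟨fun _ _ => false, 0, by simp [hv0, blockWord]⟩
    obtain ⟨i₀, hi₀, hmin⟩ := exists_min_image {i | v i ≠ 0} v <| by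
      simpa [filter_nonempty_iff, funext_iff] using hv0
    simp only [mem_filter, mem_univ, true_and] at hi₀ hmin
    have hsplit : v = fun i => (if decide (v i ≠ 0) then v i₀ else 0) + (v i - v i₀) := by
      ext i
      by_cases h : v i = 0 <;> simp [h, hmin]
    have hcard : #{i | v i - v i₀ ≠ 0} ≤ k := by
      have hsub : filter (fun i => v i - v i₀ ≠ 0) univ ⊆
          (filter (fun i => v i ≠ 0) univ).erase i₀ := by
        intro i
        simp only [mem_filter, mem_erase, mem_univ, true_and]
        exact fun h => ⟨by rintro rfl; simp at h, by omega⟩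
      have := card_le_card hsub
      rw [card_erase_of_mem (by simpa using hi₀)] at this
      omega
    obtain ⟨c, m, hcm⟩ := ih _ hcard
    refine ⟨Fin.cons (fun i => decide (v i ≠ 0)) c, Fin.cons (v i₀) m, ?_⟩
    rw [blockWord_cons, ← hcm, ← padRep_ite_add (fun i => decide (v i ≠ 0)) _ _
      (fun i h => decide_eq_true (by omega)) ⟨i₀, decide_eq_true hi₀⟩, ← hsplit]

end PadRep

theorem OneRecognizable.semiLinearSet {d : ℕ} {X : Set (Fin d → ℕ)}
    (h : OneRecognizable d X) : SemiLinearSet d X := by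
  obtain ⟨σ, _, M, hM⟩ := h
  have hX : X = ⋃ c : Fin d → Fin d → Bool,
      Fintype.linearCombination ℕ (fun k => letterCount [c k]) ''
        {m | blockWord c m ∈ M.accepts} := by
    ext v
    simp only [Set.mem_iUnion, Set.mem_image, hM, Set.mem_ofPred_eq, ← letterCount_blockWord]
    constructor
    · intro hv
      obtain ⟨c, m, hcm⟩ := exists_padRep_eq_blockWord_of_card_le d v
        ((card_filter_le _ _).trans (by simp))
      exact ⟨c, m, ⟨v, hv, hcm.symm⟩, by rw [← hcm, letterCount_padRep]⟩
    · rintro ⟨c, m, ⟨u, hu, hcm⟩, rfl⟩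
      rwa [hcm, letterCount_padRep]
  rw [hX]
  exact semiLinearSet_iUnion fun c => (semiLinearSet_setOf_blockWord_mem_accepts M c).image _

theorem semiLinearSet_doubling :
    SemiLinearSet 2 {x : Fin 2 → ℕ | ∃ n : ℕ, x = ![n, 2 * n]} := by
  refine LinearSet.semiLinearSet ⟨0, 1, fun _ => ![1, 2], ?_⟩
  ext x
  simp only [Set.mem_ofPred_eq, zero_add, Fin.sum_univ_one]
  constructor
  · rintro ⟨n, rfl⟩
    exact ⟨fun _ => n, by simp [mul_comm]⟩
  · rintro ⟨n, rfl⟩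
    exact ⟨n 0, by simp [mul_comm]⟩

theorem padRep_doubling (n : ℕ) :
    padRep 2 ![n, 2 * n] = List.replicate n (fun _ => true) ++ List.replicate n ![false, true] := by
  have hfirst :
      ![n, 2 * n] = fun i => (if (fun _ => true : Fin 2 → Bool) i then n else 0) + ![0, n] i := by
    ext i
    fin_cases i <;> simp [two_mul]
  have hsecond :
      ![0, n] = fun i => (if ![false, true] i then n else 0) + (0 : Fin 2 → ℕ) i := by
    ext i
    fin_cases i <;> simp
  rw [hfirst, padRep_ite_add _ _ _ (by simp) ⟨0, rfl⟩, hsecond,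
    padRep_ite_add _ _ _ (by simp) ⟨1, rfl⟩, padRep_zero, List.append_nil]

theorem not_oneRecognizable_doubling :
    ¬ OneRecognizable 2 {x : Fin 2 → ℕ | ∃ n : ℕ, x = ![n, 2 * n]} := by
  set L : Language (Fin 2 → Bool) :=
    {w | ∃ v ∈ {x : Fin 2 → ℕ | ∃ n : ℕ, x = ![n, 2 * n]}, w = padRep 2 v}
  intro hL
  have hinj : Injective fun n => L.leftQuotient (List.replicate n fun _ => true) := by
    intro n n' hnn'
    have hmem :
        List.replicate n ![false, true] ∈ L.leftQuotient (List.replicate n' fun _ => true) := by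
      rw [← show L.leftQuotient _ = L.leftQuotient _ from hnn', Language.mem_leftQuotient]
      exact ⟨_, ⟨n, rfl⟩, (padRep_doubling n).symm⟩
    obtain ⟨_, ⟨k, rfl⟩, hk⟩ := hmem
    have hcount := congrArg letterCount hk
    rw [letterCount_padRep] at hcount
    obtain ⟨h0, h1⟩ : n' = k ∧ n' + n = 2 * k := by
      simpa [letterCount, funext_iff, Fin.forall_fin_two] using hcount
    omega
  exact Set.infinite_range_of_injective hinj <| hL.finite_range_leftQuotient.subset <|
    Set.range_comp_subset_range (fun n => List.replicate n fun _ => true) L.leftQuotient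

theorem stmt_17 :
    (∀ (d : ℕ) (X : Set (Fin d → ℕ)), OneRecognizable d X → SemiLinearSet d X) ∧
    SemiLinearSet 2 {x : Fin 2 → ℕ | ∃ n : ℕ, x = ![n, 2 * n]} ∧
    ¬ OneRecognizable 2 {x : Fin 2 → ℕ | ∃ n : ℕ, x = ![n, 2 * n]} :=
  ⟨fun _ _ h => h.semiLinearSet, semiLinearSet_doubling, not_oneRecognizable_doubling⟩
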